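/- arXiv:1810.03144 — 2 statements merged into one kernel-verified Lean document; each statement's English description precedes it below -/
import Mathlib

section
/- Let λ > 0, α > 0 and let n be a positive integer. Then for all t > 0, the n-th derivative of the function t ↦ E_{α,1}(−λ t^α) equals −λ t^{α−n} E_{α,α−n+1}(−λ t^α). -/
/-!
On `t > 0` the classical rule `d/dt [t^(β-1) E_{α,β}(c t^α)] = t^(β-2) E_{α,β-1}(c t^α)` holds
by termwise differentiation, because `d/dt t^a / Γ(a+1) = t^(a-1) / Γ(a)`; the differentiated
series converge locally uniformly since `Γ(kα + β)` outgrows every geometric sequence. Iterating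
from `β = 1` gives `t^(-n) E_{α,1-n}(c t^α)`, and `E_{α,β}(z) = 1/Γ(β) + z E_{α,α+β}(z)` with
`1/Γ(1-n) = 0` turns this into the claimed formula.
-/

/-- The Mittag--Leffler function `E_{α,β}(z) = ∑_{k=0}^∞ z^k / Γ(kα + β)`. -/
noncomputable def mittagLeffler (α β z : ℝ) : ℝ :=
  ∑' k : ℕ, z ^ k / Real.Gamma (k * α + β)

open Real Filter Topology Set

lemma tendsto_rpow_div_Gamma_atTop {y : ℝ} (hy : 1 ≤ y) :
    Tendsto (fun x => y ^ x / Gamma x) atTop (𝓝 0) := by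
  have hfloor : Tendsto (fun x : ℝ => ⌊x⌋₊ - 1) atTop atTop :=
    (tendsto_sub_atTop_nat 1).comp tendsto_nat_floor_atTop
  have hlim := ((FloorSemiring.tendsto_pow_div_factorial_atTop y).comp hfloor).const_mul (y ^ 2)
  rw [mul_zero] at hlim
  refine squeeze_zero' ?_ ?_ hlim
  · filter_upwards [eventually_ge_atTop 0] with x hx
    exact div_nonneg (by positivity) (Gamma_nonneg_of_nonneg hx)
  · filter_upwards [eventually_ge_atTop 2] with x hx
    have h2 : 2 ≤ ⌊x⌋₊ := Nat.le_floor (by exact_mod_cast hx)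
    set m := ⌊x⌋₊ - 1
    have hcast : (m : ℝ) = ⌊x⌋₊ - 1 := by push_cast [m, show 1 ≤ ⌊x⌋₊ by omega]; ring
    have hmx : (m : ℝ) + 1 ≤ x := by linarith [Nat.floor_le (by linarith : (0:ℝ) ≤ x)]
    have hxm : x ≤ (m : ℝ) + 2 := by linarith [Nat.lt_floor_add_one x]
    have hfac : (m.factorial : ℝ) ≤ Gamma x := by
      rw [← Gamma_nat_eq_factorial]
      have h2' : (2 : ℝ) ≤ ⌊x⌋₊ := by exact_mod_cast h2
      exact Gamma_strictMonoOn_Ici.monotoneOn (mem_Ici.mpr (by linarith)) (mem_Ici.mpr hx) hmx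
    have hpow : y ^ x ≤ y ^ 2 * y ^ m := by
      rw [← pow_add, ← rpow_natCast]
      exact rpow_le_rpow_of_exponent_le hy (by push_cast; linarith)
    rw [Function.comp_apply, mul_div_assoc']
    exact div_le_div₀ (by positivity) hpow (by positivity) hfac

lemma tendsto_natCast_mul_add_atTop {α : ℝ} (hα : 0 < α) (β : ℝ) :
    Tendsto (fun k : ℕ => k * α + β) atTop atTop :=
  tendsto_atTop_add_const_right _ β (tendsto_natCast_atTop_atTop.atTop_mul_const hα)

lemma tendsto_pow_div_Gamma_mul_add_atTop {α : ℝ} (hα : 0 < α) (β : ℝ) {R : ℝ} (hR : 1 ≤ R) :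
    Tendsto (fun k : ℕ => R ^ k / Gamma (k * α + β)) atTop (𝓝 0) := by
  set y := R ^ α⁻¹
  have hy : 1 ≤ y := one_le_rpow hR (by positivity)
  have hlim := ((tendsto_rpow_div_Gamma_atTop hy).comp
    (tendsto_natCast_mul_add_atTop hα β)).const_mul (y ^ (-β))
  rw [mul_zero] at hlim
  refine hlim.congr fun k => ?_
  have hyk : y ^ (-β) * y ^ ((k : ℝ) * α + β) = R ^ k := by
    rw [← rpow_add (by positivity), show -β + ((k : ℝ) * α + β) = α * k by ring,
      ← rpow_mul (by positivity), inv_mul_cancel_left₀ hα.ne', rpow_natCast]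
  rw [Function.comp_apply, mul_div_assoc', hyk]

lemma summable_pow_div_abs_Gamma {α : ℝ} (hα : 0 < α) (β r : ℝ) :
    Summable fun k : ℕ => r ^ k / |Gamma (k * α + β)| := by
  have hR : 1 ≤ 2 * (|r| + 1) := by linarith [abs_nonneg r]
  refine summable_geometric_two.of_norm_bounded_eventually_nat ?_
  filter_upwards [(tendsto_pow_div_Gamma_mul_add_atTop hα β hR).eventually_le_const one_pos,
    (tendsto_natCast_mul_add_atTop hα β).eventually_gt_atTop 0] with k hk hpos
  have hΓ := Gamma_pos_of_pos hpos
  rw [norm_div, norm_pow, norm_abs_eq_norm, norm_eq_abs, norm_eq_abs, abs_of_pos hΓ,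
    div_le_iff₀ hΓ]
  rw [div_le_one hΓ, mul_pow] at hk
  calc |r| ^ k ≤ (|r| + 1) ^ k := by gcongr; linarith
    _ = (1 / 2) ^ k * (2 ^ k * (|r| + 1) ^ k) := by rw [← mul_assoc, ← mul_pow]; norm_num
    _ ≤ (1 / 2) ^ k * Gamma (k * α + β) := by gcongr

lemma summable_mittagLeffler {α : ℝ} (hα : 0 < α) (β z : ℝ) :
    Summable fun k : ℕ => z ^ k / Gamma (k * α + β) :=
  (summable_pow_div_abs_Gamma hα β |z|).of_norm_bounded fun k => by
    rw [norm_div, norm_pow, norm_eq_abs, norm_eq_abs]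

lemma mittagLeffler_eq_inv_Gamma_add_mul {α : ℝ} (hα : 0 < α) (β z : ℝ) :
    mittagLeffler α β z = (Gamma β)⁻¹ + z * mittagLeffler α (α + β) z := by
  rw [mittagLeffler, (summable_mittagLeffler hα β z).tsum_eq_zero_add, mittagLeffler,
    ← tsum_mul_left]
  congr 1
  · simp
  · refine tsum_congr fun k => ?_
    rw [pow_succ', mul_div_assoc, Nat.cast_succ, add_one_mul, add_assoc]

lemma hasDerivAt_rpow_div_Gamma (a : ℝ) {s : ℝ} (hs : 0 < s) :
    HasDerivAt (fun y => y ^ a / Gamma (a + 1)) (s ^ (a - 1) / Gamma a) s := by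
  refine ((hasDerivAt_rpow_const (p := a) (Or.inl hs.ne')).div_const _).congr_deriv ?_
  rcases eq_or_ne a 0 with rfl | ha
  · -- Mathlib's `Gamma 0 = 0` agrees with the zero of `1/Γ` at `0`.
    simp
  · rw [Gamma_add_one ha, mul_div_mul_left _ _ ha]

lemma rpow_mul_mul_rpow_pow (α γ c : ℝ) (k : ℕ) {y : ℝ} (hy : 0 < y) :
    y ^ γ * (c * y ^ α) ^ k = c ^ k * y ^ (k * α + γ) := by
  rw [mul_pow, ← rpow_natCast (y ^ α), ← rpow_mul hy.le, rpow_add hy, mul_comm α]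
  ring

lemma hasDerivAt_rpow_mul_pow_div_Gamma (α β c : ℝ) (k : ℕ) {s : ℝ} (hs : 0 < s) :
    HasDerivAt (fun y => y ^ (β - 1) * ((c * y ^ α) ^ k / Gamma (k * α + β)))
      (s ^ (β - 1 - 1) * ((c * s ^ α) ^ k / Gamma (k * α + (β - 1)))) s := by
  set a := k * α + (β - 1)
  have hterm : ∀ y > 0, y ^ (β - 1) * ((c * y ^ α) ^ k / Gamma (k * α + β)) =
      c ^ k * (y ^ a / Gamma (a + 1)) := fun y hy => by
    rw [← mul_div_assoc, rpow_mul_mul_rpow_pow α _ c k hy, mul_div_assoc]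
    congr 3; ring
  have hval : s ^ (β - 1 - 1) * ((c * s ^ α) ^ k / Gamma a) =
      c ^ k * (s ^ (a - 1) / Gamma a) := by
    rw [← mul_div_assoc, rpow_mul_mul_rpow_pow α _ c k hs, mul_div_assoc]
    congr 3; ring
  rw [hval]
  refine ((hasDerivAt_rpow_div_Gamma a hs).const_mul (c ^ k)).congr_of_eventuallyEq ?_
  filter_upwards [Ioi_mem_nhds hs] with y hy using hterm y hy

lemma rpow_le_rpow_add_rpow_of_mem_Icc {a b y : ℝ} (p : ℝ) (ha : 0 < a) (hy : y ∈ Icc a b) :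
    y ^ p ≤ a ^ p + b ^ p := by
  have hy0 : 0 < y := ha.trans_le hy.1
  rcases le_total 0 p with hp | hp
  · linarith [rpow_le_rpow hy0.le hy.2 hp, rpow_nonneg ha.le p]
  · linarith [rpow_le_rpow_of_nonpos ha hy.1 hp, rpow_nonneg (hy0.le.trans hy.2) p]

lemma hasDerivAt_rpow_mul_mittagLeffler {α : ℝ} (hα : 0 < α) (β c : ℝ) {s : ℝ} (hs : 0 < s) :
    HasDerivAt (fun y => y ^ (β - 1) * mittagLeffler α β (c * y ^ α))
      (s ^ (β - 1 - 1) * mittagLeffler α (β - 1) (c * s ^ α)) s := by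
  simp only [mittagLeffler, ← tsum_mul_left]
  have hmem : s ∈ Ioo (s / 2) (2 * s) := ⟨half_lt_self hs, by linarith⟩
  set M := (s / 2) ^ (β - 1 - 1) + (2 * s) ^ (β - 1 - 1)
  refine hasDerivAt_tsum_of_isPreconnected
    (u := fun k : ℕ => M * ((|c| * (2 * s) ^ α) ^ k / |Gamma (k * α + (β - 1))|))
    ((summable_pow_div_abs_Gamma hα (β - 1) _).mul_left M) isOpen_Ioo isPreconnected_Ioo
    (fun k y hy => hasDerivAt_rpow_mul_pow_div_Gamma α β c k ((half_pos hs).trans hy.1))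
    (fun k y hy => ?_) hmem ((summable_mittagLeffler hα β _).mul_left _) hmem
  have hy0 : 0 < y := (half_pos hs).trans hy.1
  rw [norm_mul, norm_div, norm_pow, norm_mul, norm_eq_abs, norm_eq_abs, norm_eq_abs,
    norm_eq_abs, abs_of_pos (rpow_pos_of_pos hy0 _), abs_of_pos (rpow_pos_of_pos hy0 _)]
  gcongr
  · exact rpow_le_rpow_add_rpow_of_mem_Icc _ (half_pos hs) (Ioo_subset_Icc_self hy)
  · exact hy.2.le

lemma iteratedDeriv_rpow_mul_mittagLeffler {α : ℝ} (hα : 0 < α) (c : ℝ) (n : ℕ) (β : ℝ)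
    {s : ℝ} (hs : 0 < s) :
    iteratedDeriv n (fun y => y ^ (β - 1) * mittagLeffler α β (c * y ^ α)) s =
      s ^ (β - n - 1) * mittagLeffler α (β - n) (c * s ^ α) := by
  induction n generalizing β with
  | zero => simp
  | succ n ih =>
    have hderiv : deriv (fun y => y ^ (β - 1) * mittagLeffler α β (c * y ^ α)) =ᶠ[𝓝 s]
        fun y => y ^ (β - 1 - 1) * mittagLeffler α (β - 1) (c * y ^ α) := by
      filter_upwards [Ioi_mem_nhds hs] with y hy
      exact (hasDerivAt_rpow_mul_mittagLeffler hα β c hy).deriv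
    rw [iteratedDeriv_succ', hderiv.iteratedDeriv_eq, ih (β - 1)]
    push_cast
    ring_nf

theorem mittagLeffler_iteratedDeriv_general (α lam : ℝ) (hα : 0 < α)
    (n : ℕ) (hn : 0 < n) (t : ℝ) (ht : 0 < t) :
    iteratedDeriv n (fun s : ℝ => mittagLeffler α 1 (-lam * s ^ α)) t
      = -lam * t ^ (α - n) * mittagLeffler α (α - n + 1) (-lam * t ^ α) := by
  have hfun : (fun s : ℝ => mittagLeffler α 1 (-lam * s ^ α)) =
      fun s => s ^ ((1 : ℝ) - 1) * mittagLeffler α 1 (-lam * s ^ α) := by simp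
  have hΓ : Gamma (1 - n) = 0 := by
    rw [show (1 : ℝ) - n = -((n - 1 : ℕ) : ℝ) by rw [Nat.cast_sub hn]; ring]
    exact Gamma_neg_nat_eq_zero _
  rw [hfun, iteratedDeriv_rpow_mul_mittagLeffler hα _ n 1 ht,
    mittagLeffler_eq_inv_Gamma_add_mul hα, hΓ, inv_zero, zero_add,
    show α + (1 - n) = α - n + 1 by ring, show (1 : ℝ) - n - 1 = -n by ring,
    sub_eq_add_neg α, rpow_add ht]
  ring

theorem mittagLeffler_iteratedDeriv (α lam : ℝ) (hα : 0 < α) (hlam : 0 < lam)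
    (n : ℕ) (hn : 0 < n) (t : ℝ) (ht : 0 < t) :
    iteratedDeriv n (fun s : ℝ => mittagLeffler α 1 (-lam * s ^ α)) t
      = -lam * t ^ (α - n) * mittagLeffler α (α - n + 1) (-lam * t ^ α) :=
  mittagLeffler_iteratedDeriv_general α lam hα n hn t ht
end

section
/- Let 1/2 < α < 1, T > 0 and λ₁ > 0. Then there exists a constant C > 0, depending only on α, T and λ₁, such that for every λ ≥ λ₁, ∫_0^T τ^{2α−2} [E_{α,α}(−λ τ^α)]² dτ ≥ C λ^{−2}. -/
/-!
The series of `E_{α,β}` is dominated on bounded sets by a convergent series (for `α ≥ 1/2`,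
`Γ(kα + β)` outgrows `⌊k/2⌋!`), so `E_{α,β}` is continuous, and since `E_{α,α}(0) = 1/Γ(α)` there
is `δ > 0` with `E_{α,α}(-x) ≥ 1/(2Γ(α))` for `0 ≤ x ≤ δ`. For `τ ≤ t₀ := (ε/λ)^{1/α}` with
`ε ≤ δ` the integrand is therefore at least `τ^{2α-2} / (4Γ(α)²)`, and integrating this over
`[0, t₀]` gives a multiple of `λ^{-(2α-1)/α}`, which dominates `λ^{-2}` for `λ ≥ λ₁` because
`(2α-1)/α ≤ 2`. Choosing `ε = min δ (λ₁ T^α)` ensures `t₀ ≤ T`.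
-/

open Real Set MeasureTheory
open scoped Nat

lemma Real.factorial_le_Gamma {n : ℕ} {t : ℝ} (hn : 1 ≤ n) (ht : n + 1 ≤ t) :
    (n ! : ℝ) ≤ Gamma t := by
  rw [← Gamma_nat_eq_factorial]
  have h2 : (2 : ℝ) ≤ n + 1 := by
    have : (1 : ℝ) ≤ n := by exact_mod_cast hn
    linarith
  exact Gamma_strictMonoOn_Ici.monotoneOn h2 (h2.trans ht) ht

section Summable

variable {α β y : ℝ}

lemma summable_pow_two_mul_add_div_Gamma (hα : 1 / 2 ≤ α) (hβ : 0 ≤ β) (hy : 0 ≤ y)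
    {j : ℕ} (hj : 4 ≤ j) :
    Summable fun m : ℕ => y ^ (2 * m + j) / Gamma ((2 * m + j : ℕ) * α + β) := by
  have hj' : (4 : ℝ) ≤ j := by exact_mod_cast hj
  refine Summable.of_nonneg_of_le (fun m => ?_) (fun m => ?_)
    ((summable_pow_div_factorial (y ^ 2)).mul_left (y ^ j))
  · exact div_nonneg (pow_nonneg hy _) (Gamma_nonneg_of_nonneg (by positivity))
  · have hΓ : (m ! : ℝ) ≤ Gamma ((2 * m + j : ℕ) * α + β) := by
      refine (Nat.cast_le.2 (Nat.factorial_le (Nat.le_succ m))).trans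
        (factorial_le_Gamma (Nat.succ_pos m) ?_)
      push_cast
      nlinarith [(Nat.cast_nonneg m : (0 : ℝ) ≤ m)]
    calc y ^ (2 * m + j) / Gamma ((2 * m + j : ℕ) * α + β)
        ≤ y ^ (2 * m + j) / m ! := by gcongr
      _ = y ^ j * ((y ^ 2) ^ m / m !) := by ring

lemma summable_pow_div_Gamma (hα : 1 / 2 ≤ α) (hβ : 0 ≤ β) (hy : 0 ≤ y) :
    Summable fun k : ℕ => y ^ k / Gamma (k * α + β) := by
  refine (summable_nat_add_iff 4).1 (Summable.even_add_odd ?_ ?_)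
  · exact summable_pow_two_mul_add_div_Gamma hα hβ hy (le_refl 4)
  · refine (summable_pow_two_mul_add_div_Gamma hα hβ hy (j := 5) (by norm_num)).congr fun m => ?_
    rw [show 2 * m + 5 = 2 * m + 1 + 4 by ring]

end Summable

lemma continuous_mittagLeffler {α β : ℝ} (hα : 1 / 2 ≤ α) (hβ : 0 ≤ β) :
    Continuous (mittagLeffler α β) := by
  refine continuous_iff_continuousAt.2 fun x => ?_
  set R := |x| + 1
  have hR : ContinuousOn (mittagLeffler α β) (Ioo (-R) R) := by
    refine continuousOn_tsum (fun k => (continuous_pow k).div_const _ |>.continuousOn)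
      (summable_pow_div_Gamma hα hβ (by positivity : 0 ≤ R)) fun k z hz => ?_
    have hz : |z| ≤ R := abs_le.2 ⟨hz.1.le, hz.2.le⟩
    rw [norm_div, norm_pow, Real.norm_eq_abs, Real.norm_eq_abs,
      abs_of_nonneg (Gamma_nonneg_of_nonneg (by positivity))]
    gcongr
  exact hR.continuousAt (Ioo_mem_nhds (by linarith [neg_abs_le x]) (by linarith [le_abs_self x]))

lemma mittagLeffler_zero (α β : ℝ) : mittagLeffler α β 0 = (Gamma β)⁻¹ := by
  rw [mittagLeffler, tsum_eq_single 0 fun k hk => by simp [hk]]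
  simp

lemma exists_pos_forall_Icc_le_mittagLeffler_neg {α β : ℝ} (hα : 1 / 2 ≤ α) (hβ : 0 < β) :
    ∃ δ > 0, ∀ x ∈ Icc 0 δ, (2 * Gamma β)⁻¹ ≤ mittagLeffler α β (-x) := by
  have hΓ := Gamma_pos_of_pos hβ
  have hlt : (2 * Gamma β)⁻¹ < mittagLeffler α β (-0) := by
    rw [neg_zero, mittagLeffler_zero]
    exact inv_strictAnti₀ hΓ (by linarith)
  obtain ⟨ε, hε, hball⟩ := Metric.eventually_nhds_iff.1 <|
    ((continuous_mittagLeffler hα hβ.le).comp continuous_neg).continuousAt.eventually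
      (lt_mem_nhds hlt)
  refine ⟨ε / 2, half_pos hε, fun x hx => (hball ?_).le⟩
  rw [Real.dist_0_eq_abs, abs_of_nonneg hx.1]
  linarith [hx.2]

lemma rpow_sub_mul_inv_sq_le {a b r : ℝ} (ha : 0 < a) (hab : a ≤ b) (hr : r ≤ 2) :
    a ^ (2 - r) * b⁻¹ ^ 2 ≤ (b ^ r)⁻¹ := by
  have hb := ha.trans_le hab
  calc a ^ (2 - r) * b⁻¹ ^ 2 ≤ b ^ (2 - r) * b⁻¹ ^ 2 := by gcongr
    _ = (b ^ r)⁻¹ := by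
        rw [rpow_sub hb, rpow_two]
        field_simp

lemma div_rpow_inv_le_of_le_mul_rpow {α ε lam T : ℝ} (hα : 0 < α) (hT : 0 ≤ T) (hlam : 0 < lam)
    (hε : 0 ≤ ε) (h : ε ≤ lam * T ^ α) : (ε / lam) ^ α⁻¹ ≤ T := by
  rw [← rpow_rpow_inv hT hα.ne']
  refine rpow_le_rpow (by positivity) ?_ (by positivity)
  rwa [div_le_iff₀ hlam, mul_comm]

lemma le_integral_rpow_mul_sq {p c t₀ T : ℝ} {g : ℝ → ℝ} (hp : -1 < p) (hc : 0 ≤ c)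
    (ht₀ : 0 ≤ t₀) (ht₀T : t₀ ≤ T) (hg : ContinuousOn g (Icc 0 T))
    (hcg : ∀ τ ∈ Ioo 0 t₀, c ≤ g τ) :
    c ^ 2 * t₀ ^ (p + 1) / (p + 1) ≤ ∫ τ in (0:ℝ)..T, τ ^ p * g τ ^ 2 := by
  have hint : IntervalIntegrable (fun τ => τ ^ p * g τ ^ 2) volume 0 T :=
    (intervalIntegral.intervalIntegrable_rpow' hp).mul_continuousOn
      (by rw [uIcc_of_le (ht₀.trans ht₀T)]; exact hg.pow 2)
  calc c ^ 2 * t₀ ^ (p + 1) / (p + 1) = ∫ τ in (0:ℝ)..t₀, c ^ 2 * τ ^ p := by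
        rw [intervalIntegral.integral_const_mul, integral_rpow (Or.inl hp),
          zero_rpow (by linarith), sub_zero, mul_div_assoc]
    _ ≤ ∫ τ in (0:ℝ)..t₀, τ ^ p * g τ ^ 2 :=
        intervalIntegral.integral_mono_on_of_le_Ioo ht₀
          ((intervalIntegral.intervalIntegrable_rpow' hp).const_mul _)
          (hint.mono_set (by rw [uIcc_of_le ht₀, uIcc_of_le (ht₀.trans ht₀T)]; gcongr))
          fun τ hτ => by
            rw [mul_comm]
            exact mul_le_mul_of_nonneg_left (pow_le_pow_left₀ hc (hcg τ hτ) 2)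
              (rpow_nonneg hτ.1.le p)
    _ ≤ ∫ τ in (0:ℝ)..T, τ ^ p * g τ ^ 2 :=
        intervalIntegral.integral_mono_interval le_rfl ht₀ ht₀T
          ((ae_restrict_iff' measurableSet_Ioc).2 <| Filter.Eventually.of_forall
            fun τ hτ => mul_nonneg (rpow_nonneg hτ.1.le _) (sq_nonneg _)) hint

theorem mittagLeffler_square_integral_lower_general (α T lam₁ : ℝ)
    (hα0 : 1/2 < α) (hT : 0 < T) (hlam₁ : 0 < lam₁) :
    ∃ C > 0, ∀ lam : ℝ, lam₁ ≤ lam →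
      C * lam⁻¹ ^ 2
        ≤ ∫ τ in (0:ℝ)..T, τ ^ (2*α - 2) * (mittagLeffler α α (-lam * τ ^ α)) ^ 2 := by
  have hα : 0 < α := by linarith
  have h2α : 0 < 2 * α - 1 := by linarith
  obtain ⟨δ, hδ, hE⟩ := exists_pos_forall_Icc_le_mittagLeffler_neg hα0.le hα
  set c := (2 * Gamma α)⁻¹
  set ε := min δ (lam₁ * T ^ α)
  set r := 2 - α⁻¹ with hr
  have hε : 0 < ε := lt_min hδ (by positivity)
  have hC : 0 < c ^ 2 / (2 * α - 1) * ε ^ r := by positivity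
  refine ⟨c ^ 2 / (2 * α - 1) * ε ^ r * lam₁ ^ (2 - r), by positivity, fun lam hlam => ?_⟩
  have hlam0 : 0 < lam := hlam₁.trans_le hlam
  set t₀ := (ε / lam) ^ α⁻¹
  have ht₀T : t₀ ≤ T := div_rpow_inv_le_of_le_mul_rpow hα hT.le hlam0 hε.le
    ((min_le_right _ _).trans (by gcongr))
  have hcE : ∀ τ ∈ Ioo 0 t₀, c ≤ mittagLeffler α α (-lam * τ ^ α) := by
    rintro τ ⟨hτ, hτt₀⟩
    rw [neg_mul]
    refine hE _ ⟨by positivity, ?_⟩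
    calc lam * τ ^ α ≤ lam * t₀ ^ α := by gcongr
      _ = ε := by rw [rpow_inv_rpow (by positivity) hα.ne']; field_simp
      _ ≤ δ := min_le_left _ _
  calc c ^ 2 / (2 * α - 1) * ε ^ r * lam₁ ^ (2 - r) * lam⁻¹ ^ 2
      ≤ c ^ 2 / (2 * α - 1) * ε ^ r * (lam ^ r)⁻¹ := by
        rw [mul_assoc]
        exact mul_le_mul_of_nonneg_left
          (rpow_sub_mul_inv_sq_le hlam₁ hlam (by linarith [inv_pos.2 hα])) hC.le
    _ = c ^ 2 * t₀ ^ (2 * α - 2 + 1) / (2 * α - 2 + 1) := by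
        rw [show 2 * α - 2 + 1 = 2 * α - 1 by ring, ← rpow_mul (by positivity),
          show α⁻¹ * (2 * α - 1) = r by rw [hr]; field_simp, div_rpow hε.le hlam0.le]
        ring
    _ ≤ _ := le_integral_rpow_mul_sq (by linarith) (by positivity) (by positivity) ht₀T
        (((continuous_mittagLeffler hα0.le hα.le).comp
          (continuous_const.mul (continuous_rpow_const hα.le))).continuousOn) hcE

theorem mittagLeffler_square_integral_lower (α T lam₁ : ℝ)
    (hα0 : 1/2 < α) (hα1 : α < 1) (hT : 0 < T) (hlam₁ : 0 < lam₁) :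
    ∃ C > 0, ∀ lam : ℝ, lam₁ ≤ lam →
      C * lam⁻¹ ^ 2
        ≤ ∫ τ in (0:ℝ)..T, τ ^ (2*α - 2) * (mittagLeffler α α (-lam * τ ^ α)) ^ 2 :=
  mittagLeffler_square_integral_lower_general α T lam₁ hα0 hT hlam₁
end
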